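/- Let 𝔤_n be obtained from the graph 𝔤_n′ (n ≥ 2 odd cycles C_1′,…,C_n′ with a unique common vertex, C_i′ of length 2k_i′+1) by lengthening the cycle C_1′ by two edges, with new edges x := x_{1,2k_1+1} and y := x_{1,2k_1} where k_1 = k_1′+1, and let 𝔤_n′′ = 𝔤_n′ \ C_1′ be the graph consisting of the remaining n−1 cycles. Then the Stanley–Reisner complexes of the corresponding initial ideals satisfy Δ_{𝔤_n} = (Δ_{𝔤_n′} * {x}) ∪ (Δ′′ * O_1′), where Δ′′ = Δ_{𝔤_n′′} * E_2′, O_1′ = {x_{1,1}, x_{1,3}, …, x_{1,2k_1′+1}} and E_2′ = {x_{2,2}, x_{2,4}, …, x_{2,2k_2′}}. -/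

import Mathlib

open Polynomial MvPolynomial Finset CategoryTheory



namespace OddCycleComp

/-! ## The graph `𝔤_{r_1,…,r_m}` : `n` odd cycles sharing a single common vertex.
Cycle `i` (for `i : Fin n`) has length `2 * k i + 1`.  The common vertex is `none`;
the vertex `u_i^{(j)}` (`1 ≤ j ≤ 2 k_i`) is `some ⟨i, j-1⟩`.  The edge `x_{i,j}`
(`1 ≤ j ≤ 2 k_i + 1`) is encoded as `⟨i, j-1⟩`. -/

/-- The vertex set of the graph. -/
abbrev Vtx (n : ℕ) (k : Fin n → ℕ) : Type := Option (Σ i : Fin n, Fin (2 * k i))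

/-- The (labels of the) edges of the graph: `⟨i, j⟩` is the edge `x_{i,j+1}` of the paper. -/
abbrev Edg (n : ℕ) (k : Fin n → ℕ) : Type := Σ i : Fin n, Fin (2 * k i + 1)

variable {n : ℕ} {k : Fin n → ℕ}

/-- First endpoint of the edge `x_{i,j}`: `u` if `j = 1`, else `u_i^{(j-1)}`. -/
def endpt1 (e : Edg n k) : Vtx n k :=
  if h : (e.2 : ℕ) = 0 then none
  else some ⟨e.1, ⟨(e.2 : ℕ) - 1, by have := e.2.isLt; omega⟩⟩

/-- Second endpoint of the edge `x_{i,j}`: `u` if `j = 2 k_i + 1`, else `u_i^{(j)}`. -/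
def endpt2 (e : Edg n k) : Vtx n k :=
  if h : (e.2 : ℕ) = 2 * k e.1 then none
  else some ⟨e.1, ⟨(e.2 : ℕ), by have := e.2.isLt; omega⟩⟩

/-- The edge `x_{i,j}` as an unordered pair of vertices. -/
def edgeSym2 (e : Edg n k) : Sym2 (Vtx n k) := s(endpt1 e, endpt2 e)

/-- The graph `𝔤` consisting of the `n` odd cycles sharing the common vertex `none`. -/
def cycGraph (n : ℕ) (k : Fin n → ℕ) : SimpleGraph (Vtx n k) :=
  SimpleGraph.fromEdgeSet (Set.range (edgeSym2 (n := n) (k := k)))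

variable (K : Type*) [Field K]

/-- The `K`-algebra map sending each edge variable to the product of its endpoints. -/
noncomputable def phi (n : ℕ) (k : Fin n → ℕ) :
    MvPolynomial (Edg n k) K →ₐ[K] MvPolynomial (Vtx n k) K :=
  MvPolynomial.aeval fun e => X (endpt1 e) * X (endpt2 e)

/-- The toric ideal `I_𝔤`, i.e. the kernel of `phi`. -/
noncomputable def toricIdeal (n : ℕ) (k : Fin n → ℕ) : Ideal (MvPolynomial (Edg n k) K) :=
  RingHom.ker (phi K n k)

/-- The edge ring `K[𝔤] ≅ K[x_{i,j}]/I_𝔤`. -/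
abbrev EdgeRing (n : ℕ) (k : Fin n → ℕ) := MvPolynomial (Edg n k) K ⧸ toricIdeal K n k

/-! ## Hilbert series and `h`-polynomials -/

/-- The Hilbert function of `S/I`: the `K`-dimension of the image of the space of
degree-`d` homogeneous polynomials in the quotient (for a homogeneous ideal this is the
dimension of the degree-`d` graded piece of `S/I`). -/
noncomputable def hilbertFun {σ : Type*} (I : Ideal (MvPolynomial σ K)) (d : ℕ) : ℕ :=
  Module.finrank K
    ((MvPolynomial.homogeneousSubmodule σ K d).map (Ideal.Quotient.mkₐ K I).toLinearMap)

/-- `IsHPolyOf hf P` says `P` is *the* `h`-polynomial of a ring with Hilbert function `hf`: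
the Hilbert series equals `P(t)/(1-t)^d` for some `d`, and `P(1) ≠ 0`.
(By the Hilbert–Serre theorem, `d` is then the Krull dimension, and `P` is unique.) -/
def IsHPolyOf (hf : ℕ → ℕ) (P : Polynomial ℤ) : Prop :=
  P.eval 1 ≠ 0 ∧ ∃ d : ℕ,
    (PowerSeries.mk fun i => (hf i : ℤ)) * (1 - PowerSeries.X) ^ d
      = PowerSeries.mk fun i => P.coeff i

/-- The `h`-polynomial formula `∏ (1+⋯+t^j)^{r_j} - t ∏ (1+⋯+t^{j-1})^{r_j}`
(here the index `j : Fin m` stands for the paper's `j = (j : ℕ) + 1 ∈ {1,…,m}`). -/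
noncomputable def hFormula (m : ℕ) (r : Fin m → ℕ) : Polynomial ℤ :=
  (∏ j : Fin m, (∑ i ∈ Finset.range ((j : ℕ) + 2), (Polynomial.X : Polynomial ℤ) ^ i) ^ r j)
    - Polynomial.X *
      ∏ j : Fin m, (∑ i ∈ Finset.range ((j : ℕ) + 1), (Polynomial.X : Polynomial ℤ) ^ i) ^ r j

/-! ## The binomial generators of the toric ideal -/

/-- `∏_{s=0}^{k_i} x_{i,2s+1}`, the product of the odd-labelled edges of cycle `i`. -/
noncomputable def oddProd (n : ℕ) (k : Fin n → ℕ) (i : Fin n) : MvPolynomial (Edg n k) K :=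
  ∏ s : Fin (k i + 1), X ⟨i, ⟨2 * (s : ℕ), by have := s.isLt; omega⟩⟩

/-- `∏_{t=1}^{k_i} x_{i,2t}`, the product of the even-labelled edges of cycle `i`. -/
noncomputable def evenProd (n : ℕ) (k : Fin n → ℕ) (i : Fin n) : MvPolynomial (Edg n k) K :=
  ∏ t : Fin (k i), X ⟨i, ⟨2 * (t : ℕ) + 1, by have := t.isLt; omega⟩⟩

/-- The binomial `(∏_{s=0}^{k_i} x_{i,2s+1})(∏_{t=1}^{k_j} x_{j,2t})
 - (∏_{s=1}^{k_i} x_{i,2s})(∏_{t=0}^{k_j} x_{j,2t+1})`. -/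
noncomputable def cycBinomial (n : ℕ) (k : Fin n → ℕ) (i j : Fin n) :
    MvPolynomial (Edg n k) K :=
  oddProd K n k i * evenProd K n k j - evenProd K n k i * oddProd K n k j

end OddCycleComp



namespace OddCycleComp

variable {n : ℕ} {k : Fin n → ℕ}
variable (K : Type*) [Field K]

/-! ## The graded lexicographic order and initial ideals -/

/-- Global rank of the edge variable `x_{i,j}`: the variables are ordered
`x_{1,1} ≻ x_{1,2} ≻ ⋯ ≻ x_{n,2k_n+1}`, with smaller rank = larger variable. -/
def rankVar (e : Edg n k) : ℕ :=
  (∑ i ∈ Finset.univ.filter (fun i : Fin n => i < e.1), (2 * k i + 1)) + (e.2 : ℕ)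

/-- The graded lexicographic order on exponent vectors induced by the above variable order:
`a ≺ b` iff `deg a < deg b`, or degrees agree and at the most significant variable where they
differ, `b` has the larger exponent. -/
def GrlexLT (a b : Edg n k →₀ ℕ) : Prop :=
  (a.sum fun _ x => x) < (b.sum fun _ x => x) ∨
    ((a.sum fun _ x => x) = (b.sum fun _ x => x) ∧
      ∃ e, a e < b e ∧ ∀ e', rankVar e' < rankVar e → a e' = b e')

/-- `u` is the exponent vector of the leading monomial of `p` w.r.t. grlex. -/
def IsLeadMonomial (p : MvPolynomial (Edg n k) K) (u : Edg n k →₀ ℕ) : Prop :=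
  u ∈ p.support ∧ ∀ v ∈ p.support, v ≠ u → GrlexLT v u

/-- The initial ideal of `I` w.r.t. the grlex order: the ideal generated by the leading
monomials of the nonzero elements of `I`. -/
noncomputable def initialIdeal (n : ℕ) (k : Fin n → ℕ) (I : Ideal (MvPolynomial (Edg n k) K)) :
    Ideal (MvPolynomial (Edg n k) K) :=
  Ideal.span {q | ∃ p ∈ I, ∃ u, IsLeadMonomial K p u ∧ q = monomial u (1 : K)}

/-- `G` is a Gröbner basis of `I` w.r.t. the grlex order. -/
def IsGroebnerBasis (n : ℕ) (k : Fin n → ℕ) (I : Ideal (MvPolynomial (Edg n k) K))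
    (G : Set (MvPolynomial (Edg n k) K)) : Prop :=
  G ⊆ (I : Set (MvPolynomial (Edg n k) K)) ∧
    initialIdeal K n k I =
      Ideal.span {q | ∃ g ∈ G, ∃ u, IsLeadMonomial K g u ∧ q = monomial u (1 : K)}

end OddCycleComp



namespace OddCycleComp

variable (K : Type*) [Field K]

/-! ## Depth, Cohen–Macaulay type, (almost) Gorenstein -/

/-- `Ext^i_R(R/𝔪, R)` as an `R`-module. -/
noncomputable def extRes (R : Type*) [CommRing R] (𝔪 : Ideal R) (i : ℕ) : ModuleCat R :=
  (((Ext R (ModuleCat R) i).obj (Opposite.op (ModuleCat.of R (R ⧸ 𝔪)))).obj (ModuleCat.of R R))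

/-- The depth of `R` w.r.t. `𝔪`: the least `i` with `Ext^i_R(R/𝔪, R) ≠ 0`. -/
noncomputable def depthOf (R : Type*) [CommRing R] (𝔪 : Ideal R) : ℕ :=
  sInf {i | Nontrivial (extRes R 𝔪 i)}

/-- The Krull dimension of `R`, as a natural number. -/
noncomputable def krullDimNat (R : Type*) [CommRing R] : ℕ :=
  (WithBot.unbotD 0 (ringKrullDim R)).untopD 0

/-- A (graded) ring `R` with irrelevant maximal ideal `𝔪` is Cohen–Macaulay
iff `depth_𝔪 R = dim R`. -/
def IsCMOf (R : Type*) [CommRing R] (𝔪 : Ideal R) : Prop :=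
  depthOf R 𝔪 = krullDimNat R

/-- The Cohen–Macaulay type of `R`: `dim_K Ext^depth_R(R/𝔪, R)`, which for a Cohen–Macaulay
graded ring is the minimal number of generators of the canonical module. -/
noncomputable def cmType (R : Type*) [CommRing R] [Algebra K R] (𝔪 : Ideal R) : ℕ :=
  letI : Module K (extRes R 𝔪 (depthOf R 𝔪)) :=
    Module.compHom (extRes R 𝔪 (depthOf R 𝔪)) (algebraMap K R)
  Module.finrank K (extRes R 𝔪 (depthOf R 𝔪))

/-- The irrelevant maximal ideal of the standard graded quotient `K[x]/I`. -/
noncomputable def irrelevantIdeal {σ : Type*} (I : Ideal (MvPolynomial σ K)) :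
    Ideal (MvPolynomial σ K ⧸ I) :=
  (Ideal.span (Set.range (X : σ → MvPolynomial σ K))).map (Ideal.Quotient.mk I)

/-- The Cohen–Macaulay type of the standard graded algebra `K[x]/I`. -/
noncomputable def cmTypeQuot {σ : Type*} (I : Ideal (MvPolynomial σ K)) : ℕ :=
  cmType K (MvPolynomial σ K ⧸ I) (irrelevantIdeal K I)

/-- `ẽ(R) = ∑_{i=0}^{s} ((h_s + ⋯ + h_{s-i}) - (h_0 + ⋯ + h_i))`, computed from the
`h`-polynomial `P` with `h`-vector `(h_0, …, h_s)`, `s = deg P`. -/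
noncomputable def tildeE (P : Polynomial ℤ) : ℤ :=
  ∑ i ∈ Finset.range (P.natDegree + 1),
    ((∑ l ∈ Finset.range (i + 1), P.coeff (P.natDegree - l)) -
      ∑ l ∈ Finset.range (i + 1), P.coeff l)

end OddCycleComp


namespace OddCycleComp

section SR

variable (K : Type*) [Field K]

/-- `O_i`, the set of odd-labelled edges `{x_{i,1}, x_{i,3}, …, x_{i,2k_i+1}}` of cycle `i`. -/
def Oset (n : ℕ) (k : Fin n → ℕ) (i : Fin n) : Finset (Edg n k) :=
  Finset.univ.image fun s : Fin (k i + 1) =>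
    (⟨i, ⟨2 * (s : ℕ), by have := s.isLt; omega⟩⟩ : Edg n k)

/-- `E_i`, the set of even-labelled edges `{x_{i,2}, x_{i,4}, …, x_{i,2k_i}}` of cycle `i`. -/
def Eset (n : ℕ) (k : Fin n → ℕ) (i : Fin n) : Finset (Edg n k) :=
  Finset.univ.image fun t : Fin (k i) =>
    (⟨i, ⟨2 * (t : ℕ) + 1, by have := t.isLt; omega⟩⟩ : Edg n k)

/-- The Stanley–Reisner complex `Δ_𝔤` of the initial ideal of the toric ideal:
the faces are the sets of edges whose product does not lie in `in_≺(I_𝔤)`. -/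
noncomputable def SRComplex (n : ℕ) (k : Fin n → ℕ) : Set (Finset (Edg n k)) :=
  {A | (∏ e ∈ A, (X e : MvPolynomial (Edg n k) K)) ∉ initialIdeal K n k (toricIdeal K n k)}

/-- A facet: a maximal face of a simplicial complex (given as its set of faces). -/
def IsFacet {α : Type*} (Δ : Set (Finset α)) (A : Finset α) : Prop :=
  A ∈ Δ ∧ ∀ B ∈ Δ, A ⊆ B → B = A

/-- The set `O_n ∪ E_1` of "suppressed" edges, lying in every facet of `Δ_𝔤`. -/
def suppressedSet (n : ℕ) (k : Fin n → ℕ) (hn : 0 < n) : Finset (Edg n k) :=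
  Oset n k ⟨n - 1, by omega⟩ ∪ Eset n k ⟨0, hn⟩

/-- The Stanley–Reisner complex `Δ_𝔤` written "suppressing the elements of `O_n ∪ E_1`":
the faces `A` disjoint from `O_n ∪ E_1` with `A ∪ O_n ∪ E_1 ∈ Δ_𝔤`
(i.e. the link of `O_n ∪ E_1`). -/
noncomputable def SRreduced (n : ℕ) (k : Fin n → ℕ) (hn : 0 < n) : Set (Finset (Edg n k)) :=
  {A | A ∩ suppressedSet n k hn = ∅ ∧ (A ∪ suppressedSet n k hn) ∈ SRComplex K n k}

/-- The join `Δ * X` of a simplicial complex and (the simplex on) a vertex set `X`: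
its faces are the unions of a face of `Δ` and a subset of `X`, so its facets are `F ∪ X`
for `F` a facet of `Δ`. -/
def joinSet {α : Type*} [DecidableEq α] (Δ : Set (Finset α)) (Xs : Finset α) :
    Set (Finset α) :=
  {C | ∃ A ∈ Δ, ∃ B ⊆ Xs, C = A ∪ B}

/-- Relabelling of the edges of a graph of odd cycles into a graph with (weakly) longer
cycles: `x_{i,j} ↦ x_{i,j}`. -/
def embSame (n : ℕ) (k₁ k₂ : Fin n → ℕ) (h : ∀ i, k₁ i ≤ k₂ i) : Edg n k₁ ↪ Edg n k₂ where
  toFun e := ⟨e.1, ⟨(e.2 : ℕ), by have := e.2.isLt; have := h e.1; omega⟩⟩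
  inj' := by
    rintro ⟨i, j⟩ ⟨i', j'⟩ hh
    obtain ⟨rfl, h2⟩ := Sigma.mk.inj_iff.mp hh
    simp only [heq_eq_eq, Fin.mk.injEq] at h2
    exact Sigma.ext rfl (heq_of_eq (Fin.ext h2))

/-- Relabelling of the edges of the graph `𝔤'' = 𝔤' \ C_1'` into the edges of a graph with
one more cycle: `x_{i,j} ↦ x_{i+1,j}`. -/
def embSucc (nn : ℕ) (k₁ : Fin nn → ℕ) (k₂ : Fin (nn + 1) → ℕ)
    (h : ∀ i : Fin nn, k₁ i = k₂ i.succ) : Edg nn k₁ ↪ Edg (nn + 1) k₂ where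
  toFun e := ⟨e.1.succ, ⟨(e.2 : ℕ), by have := e.2.isLt; have := h e.1; omega⟩⟩
  inj' := by
    rintro ⟨i, j⟩ ⟨i', j'⟩ hh
    obtain ⟨h1, h2⟩ := Sigma.mk.inj_iff.mp hh
    have : i = i' := Fin.succ_injective _ h1
    subst this
    simp only [heq_eq_eq, Fin.mk.injEq] at h2
    exact Sigma.ext rfl (heq_of_eq (Fin.ext h2))

end SR

end OddCycleComp


namespace OddCycleComp

section Walks

variable {n : ℕ} {k : Fin n → ℕ} (K : Type*) [Field K]

/-- Recover the label of an edge from the corresponding pair of vertices. -/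
noncomputable def labelOf (n : ℕ) (k : Fin n → ℕ) (hn : 0 < n) (hk : ∀ i, 1 ≤ k i)
    (s : Sym2 (Vtx n k)) : Edg n k :=
  letI : Nonempty (Edg n k) := ⟨⟨⟨0, hn⟩, ⟨0, by omega⟩⟩⟩
  Function.invFun (edgeSym2 (n := n) (k := k)) s

/-- The list of edge labels traversed by a walk in `𝔤`. -/
noncomputable def walkLabels (hn : 0 < n) (hk : ∀ i, 1 ≤ k i) {v : Vtx n k}
    (w : (cycGraph n k).Walk v v) : List (Edg n k) :=
  w.edges.map (labelOf n k hn hk)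

/-- `f_Γ^{(+)}`: the product of the odd-numbered (first, third, …) edges of a closed walk. -/
noncomputable def fPlus (hn : 0 < n) (hk : ∀ i, 1 ≤ k i) {v : Vtx n k}
    (w : (cycGraph n k).Walk v v) : MvPolynomial (Edg n k) K :=
  ((((walkLabels hn hk w).zipIdx.map Prod.swap).filter fun p => Even p.1).map fun p => (X p.2 :
    MvPolynomial (Edg n k) K)).prod

/-- `f_Γ^{(-)}`: the product of the even-numbered (second, fourth, …) edges of a closed walk. -/
noncomputable def fMinus (hn : 0 < n) (hk : ∀ i, 1 ≤ k i) {v : Vtx n k}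
    (w : (cycGraph n k).Walk v v) : MvPolynomial (Edg n k) K :=
  ((((walkLabels hn hk w).zipIdx.map Prod.swap).filter fun p => ¬ Even p.1).map fun p => (X p.2 :
    MvPolynomial (Edg n k) K)).prod

/-- A closed even walk `Γ` is primitive if there is no closed even walk `Γ'` with
`f_{Γ'} ≠ f_Γ`, `f_{Γ'}^{(+)} ∣ f_Γ^{(+)}` and `f_{Γ'}^{(-)} ∣ f_Γ^{(-)}`. -/
def IsPrimitiveWalk (hn : 0 < n) (hk : ∀ i, 1 ≤ k i) {v : Vtx n k}
    (w : (cycGraph n k).Walk v v) : Prop :=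
  ∀ (v' : Vtx n k) (w' : (cycGraph n k).Walk v' v'), 0 < w'.length → Even w'.length →
    fPlus K hn hk w' ∣ fPlus K hn hk w → fMinus K hn hk w' ∣ fMinus K hn hk w →
    fPlus K hn hk w' - fMinus K hn hk w' = fPlus K hn hk w - fMinus K hn hk w

/-- All the (labels of the) edges of cycle `i`. -/
def cycleEdges (n : ℕ) (k : Fin n → ℕ) (i : Fin n) : Finset (Edg n k) :=
  Finset.univ.image fun j : Fin (2 * k i + 1) => (⟨i, j⟩ : Edg n k)

end Walks

/-- The odd-cycle condition: any two vertex-disjoint odd cycles are joined by an edge. -/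
def OddCycleCondition {V : Type*} (G : SimpleGraph V) : Prop :=
  ∀ (a b : V) (A : G.Walk a a) (B : G.Walk b b), A.IsCycle → B.IsCycle →
    Odd A.length → Odd B.length → (∀ x ∈ A.support, x ∉ B.support) →
    ∃ x ∈ A.support, ∃ y ∈ B.support, G.Adj x y

end OddCycleComp


namespace OddCycleComp

variable (K : Type*) [Field K]

/-- `K[x]/I` is almost Gorenstein: via Higashitani's criterion (equivalent to the
Goto–Takahashi–Taniguchi definition for Cohen–Macaulay homogeneous domains),
`type(R) - 1 = ẽ(R)`, where `ẽ` is computed from the `h`-vector. -/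
def IsAlmostGorensteinQuot {σ : Type*} (I : Ideal (MvPolynomial σ K)) : Prop :=
  ∃ P : Polynomial ℤ, IsHPolyOf (hilbertFun K I) P ∧ (cmTypeQuot K I : ℤ) - 1 = tildeE P

/-- `K[x]/I` is Gorenstein: by Stanley's theorem, for a Cohen–Macaulay homogeneous domain
this is equivalent to the symmetry of the `h`-vector. -/
def IsGorensteinQuot {σ : Type*} (I : Ideal (MvPolynomial σ K)) : Prop :=
  ∃ P : Polynomial ℤ, IsHPolyOf (hilbertFun K I) P ∧
    ∀ i ≤ P.natDegree, P.coeff i = P.coeff (P.natDegree - i)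

end OddCycleComp


namespace OddCycleComp

section Aux

variable {n : ℕ} {k : Fin n → ℕ}

lemma edg_ext_iff {i i' : Fin n} {m : Fin (2*k i +1)} {m' : Fin (2*k i'+1)} :
    (⟨i,m⟩ : Edg n k) = ⟨i',m'⟩ ↔ i = i' ∧ (m:ℕ) = (m':ℕ) := by
  constructor
  · rintro h; obtain ⟨h1,h2⟩ := Sigma.mk.inj_iff.mp h; subst h1; simp_all [Fin.ext_iff]
  · rintro ⟨h1,h2⟩; subst h1; exact Sigma.ext rfl (heq_of_eq (Fin.ext h2))

lemma vtx_ext_iff {i i' : Fin n} {m : Fin (2*k i)} {m' : Fin (2*k i')} :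
    (⟨i,m⟩ : Σ i : Fin n, Fin (2 * k i)) = ⟨i',m'⟩ ↔ i = i' ∧ (m:ℕ) = (m':ℕ) := by
  constructor
  · rintro h; obtain ⟨h1,h2⟩ := Sigma.mk.inj_iff.mp h; subst h1; simp_all [Fin.ext_iff]
  · rintro ⟨h1,h2⟩; subst h1; exact Sigma.ext rfl (heq_of_eq (Fin.ext h2))

lemma endpt1_eq_some_iff (e : Edg n k) (i : Fin n) (j : Fin (2 * k i)) :
    endpt1 e = some ⟨i, j⟩ ↔ e = ⟨i, j.succ⟩ := by
  obtain ⟨i', m⟩ := e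
  rw [edg_ext_iff]
  unfold endpt1
  split_ifs with h
  · have h' : (m : ℕ) = 0 := h
    constructor
    · intro hc; exact absurd hc (by simp)
    · rintro ⟨rfl, h2⟩
      rw [Fin.val_succ] at h2; omega
  · have h' : ¬ (m : ℕ) = 0 := h
    simp only [Option.some.injEq, vtx_ext_iff]
    constructor
    · rintro ⟨rfl, h2⟩
      have h2' : (m : ℕ) - 1 = (j : ℕ) := h2
      exact ⟨rfl, by rw [Fin.val_succ]; omega⟩
    · rintro ⟨rfl, h2⟩
      rw [Fin.val_succ] at h2
      exact ⟨rfl, by show (m : ℕ) - 1 = (j : ℕ); omega⟩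

lemma endpt2_eq_some_iff (e : Edg n k) (i : Fin n) (j : Fin (2 * k i)) :
    endpt2 e = some ⟨i, j⟩ ↔ e = ⟨i, j.castSucc⟩ := by
  obtain ⟨i', m⟩ := e
  rw [edg_ext_iff]
  unfold endpt2
  split_ifs with h
  · have h' : (m : ℕ) = 2 * k i' := h
    constructor
    · intro hc; exact absurd hc (by simp)
    · rintro ⟨rfl, h2⟩
      rw [Fin.coe_castSucc] at h2; have := j.isLt; omega
  · have h' : ¬ (m : ℕ) = 2 * k i' := h
    simp only [Option.some.injEq, vtx_ext_iff]
    constructor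
    · rintro ⟨rfl, h2⟩
      exact ⟨rfl, by rw [Fin.coe_castSucc]; exact h2.symm ▸ rfl⟩
    · rintro ⟨rfl, h2⟩
      rw [Fin.coe_castSucc] at h2
      exact ⟨rfl, h2⟩

lemma endpt1_eq_none_iff (e : Edg n k) : endpt1 e = none ↔ (e.2 : ℕ) = 0 := by
  unfold endpt1; split_ifs with h <;> simp [h]

lemma endpt2_eq_none_iff (e : Edg n k) : endpt2 e = none ↔ (e.2 : ℕ) = 2 * k e.1 := by
  unfold endpt2; split_ifs with h <;> simp [h]

noncomputable def degVec (u : Edg n k →₀ ℕ) : Vtx n k →₀ ℕ :=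
  u.sum fun e m => m • (Finsupp.single (endpt1 e) 1 + Finsupp.single (endpt2 e) 1)

lemma degVec_zero : degVec (0 : Edg n k →₀ ℕ) = 0 := Finsupp.sum_zero_index

lemma degVec_add (u v : Edg n k →₀ ℕ) : degVec (u + v) = degVec u + degVec v := by
  unfold degVec
  exact Finsupp.sum_add_index' (fun a => by simp) (fun a b c => by rw [add_smul])

lemma degVec_single (e : Edg n k) (m : ℕ) :
    degVec (Finsupp.single e m) = m • (Finsupp.single (endpt1 e) 1 + Finsupp.single (endpt2 e) 1) := by
  unfold degVec
  exact Finsupp.sum_single_index (by simp)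

lemma phi_monomial {K : Type*} [Field K] (u : Edg n k →₀ ℕ) (c : K) :
    phi K n k (monomial u c) = monomial (degVec u) c := by
  induction u using Finsupp.induction with
  | zero => rw [degVec_zero]; simp [phi, monomial_zero', MvPolynomial.aeval_C, MvPolynomial.algebraMap_eq]
  | single_add e m u hm hm0 ih =>
      rw [degVec_add, ← one_mul c, ← monomial_mul, ← monomial_mul, map_mul, ih, degVec_single]
      congr 1
      rw [phi, MvPolynomial.aeval_monomial, Finsupp.prod_single_index (by simp)]
      have : (MvPolynomial.X (endpt1 e) * MvPolynomial.X (endpt2 e) : MvPolynomial (Vtx n k) K)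
          = MvPolynomial.monomial (Finsupp.single (endpt1 e) 1 + Finsupp.single (endpt2 e) 1) 1 := by
        rw [MvPolynomial.X, MvPolynomial.X, MvPolynomial.monomial_mul, one_mul]
      rw [this, MvPolynomial.monomial_pow, one_pow, map_one, one_mul]

lemma degVec_apply (u : Edg n k →₀ ℕ) (w : Vtx n k) :
    degVec u w = ∑ e : Edg n k,
      u e * ((if endpt1 e = w then 1 else 0) + (if endpt2 e = w then 1 else 0)) := by
  unfold degVec Finsupp.sum
  rw [Finsupp.finset_sum_apply]
  rw [Finset.sum_subset (Finset.subset_univ u.support)]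
  · apply Finset.sum_congr rfl
    intro e _
    simp [Finsupp.single_apply, mul_add]
  · intro e _ he
    rw [Finsupp.notMem_support_iff.mp he]
    simp

lemma degVec_at_some (u : Edg n k →₀ ℕ) (i : Fin n) (j : Fin (2 * k i)) :
    degVec u (some ⟨i,j⟩) = u ⟨i, j.succ⟩ + u ⟨i, j.castSucc⟩ := by
  rw [degVec_apply]
  have : ∀ e : Edg n k,
      u e * ((if endpt1 e = some ⟨i,j⟩ then 1 else 0) + (if endpt2 e = some ⟨i,j⟩ then 1 else 0))
      = (if e = ⟨i, j.succ⟩ then u e else 0) + (if e = ⟨i, j.castSucc⟩ then u e else 0) := by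
    intro e
    simp only [endpt1_eq_some_iff, endpt2_eq_some_iff, mul_add]
    congr 1 <;> split_ifs <;> simp
  rw [Finset.sum_congr rfl fun e _ => this e, Finset.sum_add_distrib,
    Finset.sum_ite_eq' Finset.univ, Finset.sum_ite_eq' Finset.univ]
  simp

lemma degVec_at_none (u : Edg n k →₀ ℕ) :
    degVec u none = ∑ i : Fin n, (u ⟨i, ⟨0, by omega⟩⟩ + u ⟨i, ⟨2 * k i, by omega⟩⟩) := by
  rw [degVec_apply]
  rw [← Finset.univ_sigma_univ, Finset.sum_sigma]
  apply Finset.sum_congr rfl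
  intro i _
  have key : ∀ m : Fin (2 * k i + 1),
      u ⟨i, m⟩ * ((if endpt1 ⟨i, m⟩ = none then 1 else 0) + (if endpt2 ⟨i, m⟩ = none then 1 else 0))
      = (if m = (⟨0, by omega⟩ : Fin (2 * k i + 1)) then u ⟨i, m⟩ else 0)
        + (if m = (⟨2 * k i, by omega⟩ : Fin (2 * k i + 1)) then u ⟨i, m⟩ else 0) := by
    intro m
    have e1 : endpt1 (⟨i,m⟩ : Edg n k) = none ↔ (m:ℕ) = 0 := endpt1_eq_none_iff _
    have e2 : endpt2 (⟨i,m⟩ : Edg n k) = none ↔ (m:ℕ) = 2 * k i := endpt2_eq_none_iff _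
    simp only [e1, e2, mul_add, Fin.ext_iff]
    congr 1
    · split_ifs with h h' <;> simp_all
    · split_ifs with h h' <;> simp_all
  rw [Finset.sum_congr rfl fun m _ => key m, Finset.sum_add_distrib,
    Finset.sum_ite_eq' Finset.univ, Finset.sum_ite_eq' Finset.univ]
  simp

lemma degVec_degsum (u : Edg n k →₀ ℕ) :
    (degVec u).sum (fun _ x => x) = 2 * u.sum (fun _ x => x) := by
  unfold degVec
  rw [Finsupp.sum_sum_index (fun _ => rfl) (fun _ _ _ => rfl)]
  have key : ∀ (a : Edg n k) (b : ℕ),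
      ((b • ((Finsupp.single (endpt1 a) 1) + Finsupp.single (endpt2 a) 1)).sum
        fun _ x => x) = 2 * b := by
    intro a b
    rw [smul_add, Finsupp.smul_single, Finsupp.smul_single,
      Finsupp.sum_add_index' (fun _ => rfl) (fun _ _ _ => rfl),
      Finsupp.sum_single_index rfl, Finsupp.sum_single_index rfl]
    simp [smul_eq_mul]; ring
  rw [Finsupp.sum_congr fun a _ => key a (u a)]
  rw [Finsupp.mul_sum]

lemma rankVar_lt_of_fst_lt {i i' : Fin n} (m : Fin (2 * k i + 1)) (m' : Fin (2 * k i' + 1))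
    (h : i < i') : rankVar (⟨i, m⟩ : Edg n k) < rankVar ⟨i', m'⟩ := by
  unfold rankVar
  have hsub : insert i (Finset.univ.filter (fun x : Fin n => x < i))
      ⊆ Finset.univ.filter (fun x : Fin n => x < i') := by
    intro x hx
    rcases Finset.mem_insert.mp hx with rfl | hx
    · simp [h]
    · simp only [Finset.mem_filter, Finset.mem_univ, true_and] at hx ⊢
      exact lt_trans hx h
  have hle := Finset.sum_le_sum_of_subset (f := fun i => 2 * k i + 1) hsub
  rw [Finset.sum_insert (by simp)] at hle
  have h1 : (m : ℕ) < 2 * k i + 1 := m.isLt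
  show (∑ x ∈ Finset.univ.filter (fun x : Fin n => x < i), (2 * k x + 1)) + (m : ℕ)
    < (∑ x ∈ Finset.univ.filter (fun x : Fin n => x < i'), (2 * k x + 1)) + (m' : ℕ)
  omega

lemma rankVar_lt_same {i : Fin n} (m m' : Fin (2 * k i + 1)) (h : (m : ℕ) < (m' : ℕ)) :
    rankVar (⟨i, m⟩ : Edg n k) < rankVar ⟨i, m'⟩ := by
  unfold rankVar
  show (∑ x ∈ Finset.univ.filter (fun x : Fin n => x < i), (2 * k x + 1)) + (m : ℕ)
    < (∑ x ∈ Finset.univ.filter (fun x : Fin n => x < i), (2 * k x + 1)) + (m' : ℕ)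
  omega

lemma fst_lt_or_snd_lt_of_rankVar_lt {e e' : Edg n k} (h : rankVar e < rankVar e') :
    e.1 < e'.1 ∨ (e.1 = e'.1 ∧ (e.2 : ℕ) < (e'.2 : ℕ)) := by
  obtain ⟨i, m⟩ := e; obtain ⟨i', m'⟩ := e'
  show i < i' ∨ (i = i' ∧ (m : ℕ) < (m' : ℕ))
  rcases lt_trichotomy i i' with hc | hc | hc
  · exact Or.inl hc
  · subst hc
    refine Or.inr ⟨rfl, ?_⟩
    by_contra hle
    push_neg at hle
    rcases eq_or_lt_of_le hle with heq | hlt2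
    · have hmm : m' = m := Fin.ext heq
      subst hmm
      exact lt_irrefl _ h
    · exact absurd (rankVar_lt_same (k := k) m' m hlt2) (by omega)
  · exact absurd (rankVar_lt_of_fst_lt m' m hc) (by omega)

/-- Indicator finsupp of a finite set of edges. -/
noncomputable def ind (A : Finset (Edg n k)) : Edg n k →₀ ℕ :=
  ∑ e ∈ A, Finsupp.single e 1

lemma ind_apply (A : Finset (Edg n k)) (e : Edg n k) :
    ind A e = if e ∈ A then 1 else 0 := by
  unfold ind
  rw [Finsupp.finset_sum_apply]
  simp [Finsupp.single_apply, Finset.sum_ite_eq]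

lemma mem_Oset {i : Fin n} {e : Edg n k} :
    e ∈ Oset n k i ↔ e.1 = i ∧ (e.2 : ℕ) % 2 = 0 := by
  obtain ⟨i', m⟩ := e
  simp only [Oset, Finset.mem_image, Finset.mem_univ, true_and]
  constructor
  · rintro ⟨s, hs⟩
    obtain ⟨h1, h2⟩ := edg_ext_iff.mp hs
    exact ⟨h1.symm, by simp only at h2; omega⟩
  · rintro ⟨rfl, h2⟩
    have hm := m.isLt
    exact ⟨⟨(m : ℕ) / 2, by change (m:ℕ) < 2 * k i' + 1 at hm; omega⟩,
      edg_ext_iff.mpr ⟨rfl, by simp; omega⟩⟩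

lemma mem_Eset {i : Fin n} {e : Edg n k} :
    e ∈ Eset n k i ↔ e.1 = i ∧ (e.2 : ℕ) % 2 = 1 := by
  obtain ⟨i', m⟩ := e
  simp only [Eset, Finset.mem_image, Finset.mem_univ, true_and]
  constructor
  · rintro ⟨s, hs⟩
    obtain ⟨h1, h2⟩ := edg_ext_iff.mp hs
    exact ⟨h1.symm, by simp only at h2; omega⟩
  · rintro ⟨rfl, h2⟩
    have hm := m.isLt
    exact ⟨⟨((m : ℕ) - 1) / 2, by change (m:ℕ) < 2 * k i' + 1 at hm; omega⟩,
      edg_ext_iff.mpr ⟨rfl, by simp; omega⟩⟩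

/-- The key combinatorial lemma. -/
lemma keyDiv (u v : Edg n k →₀ ℕ) (hdeg : degVec u = degVec v) (hlt : GrlexLT v u) :
    ∃ i j : Fin n, i < j ∧ ind (Oset n k i) + ind (Eset n k j) ≤ u := by
  classical
  -- the difference function
  set d : Fin n → ℕ → ℤ := fun i j =>
    if h : j < 2 * k i + 1 then (u ⟨i, ⟨j, h⟩⟩ : ℤ) - (v ⟨i, ⟨j, h⟩⟩ : ℤ) else 0 with hd
  -- consecutive relations
  have step : ∀ (i : Fin n) (j : ℕ), j + 1 < 2 * k i + 1 → d i (j + 1) = - d i j := by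
    intro i j hj
    have hj' : j < 2 * k i := by omega
    have hv := DFunLike.congr_fun hdeg (some ⟨i, ⟨j, hj'⟩⟩)
    rw [degVec_at_some, degVec_at_some] at hv
    have e1 : (⟨j, hj'⟩ : Fin (2 * k i)).succ = (⟨j + 1, by omega⟩ : Fin (2 * k i + 1)) := rfl
    have e2 : (⟨j, hj'⟩ : Fin (2 * k i)).castSucc = (⟨j, by omega⟩ : Fin (2 * k i + 1)) := rfl
    rw [e1, e2] at hv
    simp only [hd, dif_pos hj, dif_pos (show j < 2 * k i + 1 by omega)]
    omega
  -- alternation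
  have alt : ∀ (i : Fin n) (j : ℕ), j < 2 * k i + 1 → d i j = (-1) ^ j * d i 0 := by
    intro i j
    induction j with
    | zero => intro _; simp
    | succ j ih =>
        intro hj
        rw [step i j hj, ih (by omega), pow_succ]
        ring
  -- sum over cycles is zero
  have hzero : ∑ i : Fin n, d i 0 = 0 := by
    have hv := DFunLike.congr_fun hdeg none
    rw [degVec_at_none, degVec_at_none] at hv
    have hv' : ∑ i : Fin n, (d i 0 + d i (2 * k i)) = 0 := by
      have hA : ∑ i : Fin n, (d i 0 + d i (2 * k i)) =
          (∑ i : Fin n, (((u ⟨i, ⟨0, by omega⟩⟩ + u ⟨i, ⟨2 * k i, by omega⟩⟩ : ℕ)) : ℤ))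
          - ∑ i : Fin n, (((v ⟨i, ⟨0, by omega⟩⟩ + v ⟨i, ⟨2 * k i, by omega⟩⟩ : ℕ)) : ℤ) := by
        rw [← Finset.sum_sub_distrib]
        apply Finset.sum_congr rfl
        intro i _
        simp only [hd, dif_pos (show 0 < 2 * k i + 1 by omega),
          dif_pos (show 2 * k i < 2 * k i + 1 by omega)]
        push_cast
        ring
      rw [hA, ← Nat.cast_sum, ← Nat.cast_sum, hv]
      ring
    have heven : ∀ i : Fin n, d i (2 * k i) = d i 0 := by
      intro i
      rw [alt i (2 * k i) (by omega)]
      rw [pow_mul]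
      norm_num
    have : ∑ i : Fin n, (2 * d i 0) = 0 := by
      rw [← hv']
      apply Finset.sum_congr rfl
      intro i _
      rw [heven i]; ring
    rw [← Finset.mul_sum] at this
    omega
  -- total degrees agree
  have hsum : (u.sum fun _ x => x) = (v.sum fun _ x => x) := by
    have h1 := degVec_degsum u
    have h2 := degVec_degsum v
    rw [hdeg] at h1
    omega
  rcases hlt with h | ⟨_, e, he, hmin⟩
  · omega
  obtain ⟨i0, m0⟩ := e
  -- show m0 = 0 and d i0 0 > 0
  have hm0 : (m0 : ℕ) = 0 := by
    by_contra hm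
    have h0 : rankVar (⟨i0, ⟨0, by omega⟩⟩ : Edg n k) < rankVar ⟨i0, m0⟩ :=
      rankVar_lt_same _ _ (by show (0:ℕ) < (m0:ℕ); omega)
    have := hmin _ h0
    have hd0 : d i0 0 = 0 := by
      simp only [hd, dif_pos (show 0 < 2 * k i0 + 1 by omega)]
      omega
    have := alt i0 (m0 : ℕ) m0.isLt
    rw [hd0] at this
    simp only [hd, dif_pos m0.isLt, mul_zero] at this
    have : u ⟨i0, m0⟩ = v ⟨i0, m0⟩ := by
      have h2 : (⟨(m0 : ℕ), m0.isLt⟩ : Fin (2 * k i0 + 1)) = m0 := Fin.ext rfl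
      rw [h2] at this; omega
    omega
  have hpos : 0 < d i0 0 := by
    simp only [hd, dif_pos (show 0 < 2 * k i0 + 1 by omega)]
    have h2 : (⟨0, by omega⟩ : Fin (2 * k i0 + 1)) = m0 :=
      Fin.ext (by show (0:ℕ) = (m0:ℕ); omega)
    rw [h2]
    omega
  -- all earlier cycles vanish
  have hsmall : ∀ i : Fin n, i < i0 → d i 0 = 0 := by
    intro i hi
    have h0 : rankVar (⟨i, ⟨0, by omega⟩⟩ : Edg n k) < rankVar ⟨i0, m0⟩ :=
      rankVar_lt_of_fst_lt _ _ hi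
    have := hmin _ h0
    simp only [hd, dif_pos (show 0 < 2 * k i + 1 by omega)]
    omega
  -- find a negative cycle
  have hneg : ∃ j : Fin n, d j 0 < 0 := by
    by_contra hno
    push_neg at hno
    have : 0 < ∑ i : Fin n, d i 0 :=
      Finset.sum_pos' (fun i _ => hno i) ⟨i0, Finset.mem_univ _, hpos⟩
    omega
  obtain ⟨j, hj⟩ := hneg
  have hij : i0 < j := by
    rcases lt_trichotomy j i0 with hc | hc | hc
    · exact absurd (hsmall j hc) (by omega)
    · subst hc; omega
    · exact hc
  refine ⟨i0, j, hij, ?_⟩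
  -- pointwise divisibility
  intro e'
  rw [Finsupp.add_apply, ind_apply, ind_apply]
  by_cases hO : e' ∈ Oset n k i0
  · obtain ⟨h1, h2⟩ := mem_Oset.mp hO
    have hE : e' ∉ Eset n k j := by
      intro hE
      obtain ⟨h1', _⟩ := mem_Eset.mp hE
      rw [h1] at h1'; exact absurd h1' (by omega)
    rw [if_pos hO, if_neg hE]
    obtain ⟨i', m⟩ := e'
    simp only at h1; subst h1
    have halt := alt i' (m : ℕ) m.isLt
    have hpow : ((-1 : ℤ)) ^ (m : ℕ) = 1 := by
      rcases Nat.even_iff.mpr h2 with ⟨t, ht⟩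
      rw [ht, ← two_mul, pow_mul]; norm_num
    rw [hpow, one_mul] at halt
    have hpos' : 0 < d i' 0 := hpos
    simp only [hd, dif_pos m.isLt, dif_pos (show 0 < 2 * k i' + 1 by omega)] at halt hpos'
    have h2' : (⟨(m : ℕ), m.isLt⟩ : Fin (2 * k i' + 1)) = m := Fin.ext rfl
    rw [h2'] at halt
    omega
  · rw [if_neg hO, zero_add]
    by_cases hE : e' ∈ Eset n k j
    · obtain ⟨h1, h2⟩ := mem_Eset.mp hE
      rw [if_pos hE]
      obtain ⟨i', m⟩ := e'
      simp only at h1; subst h1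
      have halt := alt i' (m : ℕ) m.isLt
      have hpow : ((-1 : ℤ)) ^ (m : ℕ) = -1 := by
        rcases Nat.odd_iff.mpr h2 with ⟨t, ht⟩
        rw [ht, pow_add, pow_mul]; norm_num
      rw [hpow] at halt
      have hj' : d i' 0 < 0 := hj
      simp only [hd, dif_pos m.isLt, dif_pos (show 0 < 2 * k i' + 1 by omega)] at halt hj'
      have h2' : (⟨(m : ℕ), m.isLt⟩ : Fin (2 * k i' + 1)) = m := Fin.ext rfl
      rw [h2'] at halt
      omega
    · rw [if_neg hE]
      omega

variable (K : Type*) [Field K]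

/-! products of variables as monomials -/

lemma prod_monomial_one {α : Type*} (s : Finset α) (f : α → (Edg n k →₀ ℕ)) :
    (∏ a ∈ s, (monomial (f a) (1 : K))) = monomial (∑ a ∈ s, f a) (1 : K) := by
  classical
  induction s using Finset.induction with
  | empty => simp [monomial_zero']
  | insert _ _ hne ih =>
      rw [Finset.prod_insert hne, Finset.sum_insert hne, ih, monomial_mul, one_mul]

lemma prod_X_eq (A : Finset (Edg n k)) :
    (∏ e ∈ A, (MvPolynomial.X e : MvPolynomial (Edg n k) K)) = monomial (ind A) (1 : K) := by
  unfold ind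
  rw [← prod_monomial_one]
  apply Finset.prod_congr rfl
  intro e _
  rw [MvPolynomial.X]

lemma oddProd_eq (i : Fin n) : oddProd K n k i = monomial (ind (Oset n k i)) (1 : K) := by
  rw [← prod_X_eq]
  unfold Oset
  rw [Finset.prod_image]
  · rfl
  · intro a _ b _ hab
    obtain ⟨_, h2⟩ := edg_ext_iff.mp hab
    exact Fin.ext (by simp only at h2; omega)

lemma evenProd_eq (i : Fin n) : evenProd K n k i = monomial (ind (Eset n k i)) (1 : K) := by
  rw [← prod_X_eq]
  unfold Eset
  rw [Finset.prod_image]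
  · rfl
  · intro a _ b _ hab
    obtain ⟨_, h2⟩ := edg_ext_iff.mp hab
    exact Fin.ext (by simp only at h2; omega)

lemma ind_Oset_apply (i i' : Fin n) (m : Fin (2 * k i' + 1)) :
    ind (Oset n k i) ⟨i', m⟩ = if i' = i ∧ (m : ℕ) % 2 = 0 then 1 else 0 := by
  rw [ind_apply]
  by_cases h : (⟨i', m⟩ : Edg n k) ∈ Oset n k i
  · rw [if_pos h, if_pos]
    obtain ⟨h1, h2⟩ := mem_Oset.mp h
    exact ⟨h1, h2⟩
  · rw [if_neg h, if_neg]
    rintro ⟨h1, h2⟩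
    exact h (mem_Oset.mpr ⟨h1, h2⟩)

lemma ind_Eset_apply (i i' : Fin n) (m : Fin (2 * k i' + 1)) :
    ind (Eset n k i) ⟨i', m⟩ = if i' = i ∧ (m : ℕ) % 2 = 1 then 1 else 0 := by
  rw [ind_apply]
  by_cases h : (⟨i', m⟩ : Edg n k) ∈ Eset n k i
  · rw [if_pos h, if_pos]
    obtain ⟨h1, h2⟩ := mem_Eset.mp h
    exact ⟨h1, h2⟩
  · rw [if_neg h, if_neg]
    rintro ⟨h1, h2⟩
    exact h (mem_Eset.mpr ⟨h1, h2⟩)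

lemma degVec_ind_Oset (i : Fin n) :
    degVec (ind (Oset n k i)) = degVec (ind (Eset n k i)) + Finsupp.single none 2 := by
  ext w
  rw [Finsupp.add_apply]
  rcases w with _ | ⟨i', j⟩
  · rw [degVec_at_none, degVec_at_none, Finsupp.single_apply, if_pos rfl]
    have hO : ∀ i'' : Fin n,
        (ind (Oset n k i) ⟨i'', ⟨0, by omega⟩⟩ + ind (Oset n k i) ⟨i'', ⟨2 * k i'', by omega⟩⟩)
        = if i'' = i then 2 else 0 := by
      intro i''
      rw [ind_Oset_apply, ind_Oset_apply]
      split_ifs with h1 h2 h3 h3 h4 <;> simp_all <;> omega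
    have hE : ∀ i'' : Fin n,
        (ind (Eset n k i) ⟨i'', ⟨0, by omega⟩⟩ + ind (Eset n k i) ⟨i'', ⟨2 * k i'', by omega⟩⟩)
        = 0 := by
      intro i''
      rw [ind_Eset_apply, ind_Eset_apply]
      split_ifs with h1 h2 h2 <;> simp_all <;> omega
    rw [Finset.sum_congr rfl fun i'' _ => hO i'', Finset.sum_congr rfl fun i'' _ => hE i'']
    simp [Finset.sum_ite_eq' Finset.univ]
  · rw [degVec_at_some, degVec_at_some, Finsupp.single_apply,
      if_neg (by simp), add_zero, ind_Oset_apply, ind_Oset_apply,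
      ind_Eset_apply, ind_Eset_apply]
    have h1 : ((j.succ : Fin (2 * k i' + 1)) : ℕ) = (j : ℕ) + 1 := Fin.val_succ j
    have h2 : ((j.castSucc : Fin (2 * k i' + 1)) : ℕ) = (j : ℕ) := Fin.coe_castSucc j
    rw [h1, h2]
    split_ifs <;> simp_all <;> omega

lemma degVec_w1_w2 (i j : Fin n) :
    degVec (ind (Oset n k i) + ind (Eset n k j))
      = degVec (ind (Eset n k i) + ind (Oset n k j)) := by
  rw [degVec_add, degVec_add, degVec_ind_Oset i, degVec_ind_Oset j]
  abel

lemma cycBinomial_mem_toric (i j : Fin n) :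
    cycBinomial K n k i j ∈ toricIdeal K n k := by
  rw [toricIdeal, RingHom.mem_ker]
  unfold cycBinomial
  rw [oddProd_eq, evenProd_eq, oddProd_eq, evenProd_eq, monomial_mul, monomial_mul,
    map_sub, phi_monomial, phi_monomial, degVec_w1_w2 i j, sub_self]


lemma w1_apply_i0 (i j : Fin n) (hij : i ≠ j) :
    (ind (Oset n k i) + ind (Eset n k j)) ⟨i, ⟨0, by omega⟩⟩ = 1 := by
  rw [Finsupp.add_apply, ind_Oset_apply, ind_Eset_apply]
  rw [if_pos ⟨rfl, by norm_num⟩, if_neg (by rintro ⟨_, h⟩; simp at h)]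

lemma w2_apply_i0 (i j : Fin n) (hij : i ≠ j) :
    (ind (Eset n k i) + ind (Oset n k j)) ⟨i, ⟨0, by omega⟩⟩ = 0 := by
  rw [Finsupp.add_apply, ind_Eset_apply, ind_Oset_apply]
  rw [if_neg (by rintro ⟨_, h⟩; simp at h), if_neg (by rintro ⟨h, _⟩; exact hij h)]

lemma isLead_cycBinomial (i j : Fin n) (hij : i < j) :
    IsLeadMonomial K (cycBinomial K n k i j) (ind (Oset n k i) + ind (Eset n k j)) := by
  classical
  set w1 : Edg n k →₀ ℕ := ind (Oset n k i) + ind (Eset n k j) with hw1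
  set w2 : Edg n k →₀ ℕ := ind (Eset n k i) + ind (Oset n k j) with hw2
  have hijne : i ≠ j := Fin.ne_of_lt hij
  have hne : w1 ≠ w2 := by
    intro h
    have := DFunLike.congr_fun h (⟨i, ⟨0, by omega⟩⟩ : Edg n k)
    rw [hw1, hw2] at this
    rw [w1_apply_i0 i j hijne, w2_apply_i0 i j hijne] at this
    exact one_ne_zero this
  have hb : cycBinomial K n k i j = monomial w1 (1 : K) - monomial w2 (1 : K) := by
    unfold cycBinomial
    rw [oddProd_eq, evenProd_eq, oddProd_eq, evenProd_eq, monomial_mul, monomial_mul, one_mul]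
  have hcoeff1 : coeff w1 (cycBinomial K n k i j) = 1 := by
    rw [hb, MvPolynomial.coeff_sub, MvPolynomial.coeff_monomial, MvPolynomial.coeff_monomial, if_pos rfl, if_neg (by
      intro h; exact hne (h.symm)), sub_zero]
  have hmem : w1 ∈ (cycBinomial K n k i j).support :=
    MvPolynomial.mem_support_iff.mpr (by rw [hcoeff1]; exact one_ne_zero)
  refine ⟨hmem, ?_⟩
  intro v hv hvne
  have hsupp : (cycBinomial K n k i j).support ⊆ {w1, w2} := by
    rw [hb]
    refine (MvPolynomial.support_sub _ _ _).trans ?_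
    rw [MvPolynomial.support_monomial, MvPolynomial.support_monomial, if_neg one_ne_zero, if_neg one_ne_zero]
    intro x hx
    simpa using hx
  have hv2 : v = w2 := by
    rcases Finset.mem_insert.mp (hsupp hv) with h | h
    · exact absurd h hvne
    · exact Finset.mem_singleton.mp h
  subst hv2
  right
  constructor
  · -- equal total degrees
    have hdeg : degVec w1 = degVec w2 := degVec_w1_w2 i j
    have h1 := degVec_degsum w1
    have h2 := degVec_degsum w2
    rw [hdeg] at h1
    omega
  · refine ⟨⟨i, ⟨0, by omega⟩⟩, ?_, ?_⟩
    · rw [hw1, hw2, w1_apply_i0 i j hijne, w2_apply_i0 i j hijne]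
      norm_num
    · intro e' he'
      rcases fst_lt_or_snd_lt_of_rankVar_lt he' with h | ⟨h1, h2⟩
      · obtain ⟨i'', m''⟩ := e'
        have hii : i'' < i := h
        have hni : i'' ≠ i := Fin.ne_of_lt hii
        have hnj : i'' ≠ j := Fin.ne_of_lt (lt_trans hii hij)
        rw [hw1, hw2, Finsupp.add_apply, Finsupp.add_apply,
          ind_Oset_apply, ind_Eset_apply, ind_Eset_apply, ind_Oset_apply,
          if_neg (by rintro ⟨h', _⟩; exact hni h'), if_neg (by rintro ⟨h', _⟩; exact hnj h'),
          if_neg (by rintro ⟨h', _⟩; exact hni h'), if_neg (by rintro ⟨h', _⟩; exact hnj h')]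
      · obtain ⟨i'', m''⟩ := e'
        have : (m'' : ℕ) < 0 := h2
        omega

lemma lead_fiber (p : MvPolynomial (Edg n k) K) (hp : p ∈ toricIdeal K n k)
    (u : Edg n k →₀ ℕ) (hu : IsLeadMonomial K p u) :
    ∃ v ∈ p.support, v ≠ u ∧ degVec v = degVec u := by
  by_contra hcon
  push_neg at hcon
  have hphi : phi K n k p = 0 := by
    rw [toricIdeal] at hp
    exact hp
  have hc : coeff (degVec u) (phi K n k p) = coeff u p := by
    conv_lhs => rw [p.as_sum, map_sum]
    simp only [phi_monomial]
    rw [MvPolynomial.coeff_sum]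
    rw [Finset.sum_eq_single u]
    · rw [MvPolynomial.coeff_monomial, if_pos rfl]
    · intro v hv hvne
      rw [MvPolynomial.coeff_monomial, if_neg (hcon v hv hvne)]
    · intro h
      exact absurd hu.1 h
  rw [hphi] at hc
  simp only [MvPolynomial.coeff_zero] at hc
  exact (MvPolynomial.mem_support_iff.mp hu.1) hc.symm

def genSet (n : ℕ) (k : Fin n → ℕ) : Set (Edg n k →₀ ℕ) :=
  {s | ∃ i j : Fin n, i < j ∧ s = ind (Oset n k i) + ind (Eset n k j)}

lemma initialIdeal_eq :
    initialIdeal K n k (toricIdeal K n k)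
      = Ideal.span ((fun s => MvPolynomial.monomial s (1 : K)) '' genSet n k) := by
  classical
  apply le_antisymm
  · rw [initialIdeal]
    apply Ideal.span_le.mpr
    rintro q ⟨p, hp, u, hu, rfl⟩
    rw [SetLike.mem_coe, mem_ideal_span_monomial_image]
    intro xi hxi
    rw [MvPolynomial.support_monomial, if_neg one_ne_zero, Finset.mem_singleton] at hxi
    subst hxi
    obtain ⟨v, hv, hvne, hvdeg⟩ := lead_fiber K p hp xi hu
    have hlt := hu.2 v hv hvne
    obtain ⟨i, j, hij, hle⟩ := keyDiv xi v hvdeg.symm hlt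
    exact ⟨_, ⟨i, j, hij, rfl⟩, hle⟩
  · apply Ideal.span_le.mpr
    rintro q ⟨s, ⟨i, j, hij, rfl⟩, rfl⟩
    apply Ideal.subset_span
    exact ⟨cycBinomial K n k i j, cycBinomial_mem_toric K i j, _,
      isLead_cycBinomial K i j hij, rfl⟩

lemma ind_add_le_iff {A B C : Finset (Edg n k)} (hdisj : ∀ e, e ∈ A → e ∉ B) :
    ind A + ind B ≤ ind C ↔ A ∪ B ⊆ C := by
  constructor
  · intro h e he
    rcases Finset.mem_union.mp he with hA | hB
    · have := h e
      rw [Finsupp.add_apply, ind_apply, ind_apply, ind_apply, if_pos hA] at this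
      by_contra hC
      rw [if_neg hC] at this
      omega
    · have := h e
      rw [Finsupp.add_apply, ind_apply, ind_apply, ind_apply, if_pos hB] at this
      by_contra hC
      rw [if_neg hC] at this
      split_ifs at this <;> omega
  · intro h e
    rw [Finsupp.add_apply, ind_apply, ind_apply, ind_apply]
    by_cases hA : e ∈ A
    · rw [if_pos hA, if_neg (hdisj e hA), if_pos (h (Finset.mem_union_left _ hA))]
    · rw [if_neg hA, zero_add]
      by_cases hB : e ∈ B
      · rw [if_pos hB, if_pos (h (Finset.mem_union_right _ hB))]
      · rw [if_neg hB]
        omega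

lemma Oset_Eset_disjoint {i j : Fin n} (hij : i ≠ j) (e : Edg n k)
    (he : e ∈ Oset n k i) : e ∉ Eset n k j := by
  intro hE
  obtain ⟨h1, _⟩ := mem_Oset.mp he
  obtain ⟨h2, _⟩ := mem_Eset.mp hE
  exact hij (h1 ▸ h2 ▸ rfl)

lemma mem_SRComplex_iff (A : Finset (Edg n k)) :
    A ∈ SRComplex K n k ↔ ∀ i j : Fin n, i < j → ¬(Oset n k i ∪ Eset n k j ⊆ A) := by
  classical
  rw [SRComplex, Set.mem_setOf_eq, prod_X_eq, initialIdeal_eq]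
  constructor
  · intro h i j hij hsub
    apply h
    rw [mem_ideal_span_monomial_image]
    intro xi hxi
    rw [MvPolynomial.support_monomial, if_neg one_ne_zero, Finset.mem_singleton] at hxi
    subst hxi
    exact ⟨ind (Oset n k i) + ind (Eset n k j), ⟨i, j, hij, rfl⟩,
      (ind_add_le_iff (Oset_Eset_disjoint (Fin.ne_of_lt hij))).mpr hsub⟩
  · intro h hmem
    rw [mem_ideal_span_monomial_image] at hmem
    obtain ⟨s, ⟨i, j, hij, rfl⟩, hle⟩ := hmem (ind A)
      (by rw [MvPolynomial.support_monomial, if_neg one_ne_zero]; exact Finset.mem_singleton_self _)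
    exact h i j hij ((ind_add_le_iff (Oset_Eset_disjoint (Fin.ne_of_lt hij))).mp hle)

lemma mem_suppressedSet {hn : 0 < n} {e : Edg n k} :
    e ∈ suppressedSet n k hn ↔ ((e.1 : ℕ) = n - 1 ∧ (e.2 : ℕ) % 2 = 0)
      ∨ ((e.1 : ℕ) = 0 ∧ (e.2 : ℕ) % 2 = 1) := by
  rw [suppressedSet, Finset.mem_union, mem_Oset, mem_Eset]
  constructor
  · rintro (⟨h1, h2⟩ | ⟨h1, h2⟩)
    · exact Or.inl ⟨by rw [h1], h2⟩
    · exact Or.inr ⟨by rw [h1], h2⟩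
  · rintro (⟨h1, h2⟩ | ⟨h1, h2⟩)
    · exact Or.inl ⟨Fin.ext h1, h2⟩
    · exact Or.inr ⟨Fin.ext h1, h2⟩

lemma mem_SRreduced_iff (hn : 0 < n) (A : Finset (Edg n k)) :
    A ∈ SRreduced K n k hn ↔ (A ∩ suppressedSet n k hn = ∅ ∧
      ∀ i j : Fin n, i < j → ¬(Oset n k i ∪ Eset n k j ⊆ A)) := by
  rw [SRreduced, Set.mem_setOf_eq, mem_SRComplex_iff]
  constructor
  · rintro ⟨h1, h2⟩
    refine ⟨h1, fun i j hij hsub => h2 i j hij (hsub.trans Finset.subset_union_left)⟩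
  · rintro ⟨h1, h2⟩
    refine ⟨h1, ?_⟩
    intro i j hij hsub
    apply h2 i j hij
    intro e he
    rcases Finset.mem_union.mp (hsub he) with hA | hS
    · exact hA
    exfalso
    have hje : (j : ℕ) ≤ n - 1 := by have := j.isLt; omega
    have hij' : (i : ℕ) < (j : ℕ) := hij
    rcases Finset.mem_union.mp he with heO | heE
    · obtain ⟨he1, he2⟩ := mem_Oset.mp heO
      rcases mem_suppressedSet.mp hS with ⟨hs1, _⟩ | ⟨_, hs2⟩
      · rw [he1] at hs1; omega
      · omega
    · obtain ⟨he1, he2⟩ := mem_Eset.mp heE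
      rcases mem_suppressedSet.mp hS with ⟨_, hs2⟩ | ⟨hs1, _⟩
      · omega
      · rw [he1] at hs1; omega
section Decomp

variable {nn : ℕ} {k' k : Fin (nn + 1) → ℕ} {k'' : Fin nn → ℕ}

lemma iota_mem_Oset (h : ∀ i, k' i ≤ k i) (a : Edg (nn + 1) k') (i : Fin (nn + 1)) :
    embSame (nn + 1) k' k h a ∈ Oset (nn + 1) k i ↔ a ∈ Oset (nn + 1) k' i := by
  rw [mem_Oset, mem_Oset]
  exact Iff.rfl

lemma iota_mem_Eset (h : ∀ i, k' i ≤ k i) (a : Edg (nn + 1) k') (i : Fin (nn + 1)) :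
    embSame (nn + 1) k' k h a ∈ Eset (nn + 1) k i ↔ a ∈ Eset (nn + 1) k' i := by
  rw [mem_Eset, mem_Eset]
  exact Iff.rfl

lemma iota_fst (h : ∀ i, k' i ≤ k i) (a : Edg (nn + 1) k') :
    (embSame (nn + 1) k' k h a).1 = a.1 := rfl

lemma iota_snd (h : ∀ i, k' i ≤ k i) (a : Edg (nn + 1) k') :
    ((embSame (nn + 1) k' k h a).2 : ℕ) = (a.2 : ℕ) := rfl

lemma kappa_fst (h : ∀ i : Fin nn, k'' i = k i.succ) (a : Edg nn k'') :
    (embSucc nn k'' k h a).1 = a.1.succ := rfl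

lemma kappa_snd (h : ∀ i : Fin nn, k'' i = k i.succ) (a : Edg nn k'') :
    ((embSucc nn k'' k h a).2 : ℕ) = (a.2 : ℕ) := rfl

lemma kappa_mem_Oset (h : ∀ i : Fin nn, k'' i = k i.succ) (a : Edg nn k'') (i' : Fin nn) :
    embSucc nn k'' k h a ∈ Oset (nn + 1) k i'.succ ↔ a ∈ Oset nn k'' i' := by
  rw [mem_Oset, mem_Oset]
  show (a.1.succ = i'.succ ∧ (a.2 : ℕ) % 2 = 0) ↔ (a.1 = i' ∧ (a.2 : ℕ) % 2 = 0)
  exact and_congr_left fun _ => ⟨fun hh => Fin.succ_injective _ hh, fun hh => by rw [hh]⟩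

lemma kappa_mem_Eset (h : ∀ i : Fin nn, k'' i = k i.succ) (a : Edg nn k'') (i' : Fin nn) :
    embSucc nn k'' k h a ∈ Eset (nn + 1) k i'.succ ↔ a ∈ Eset nn k'' i' := by
  rw [mem_Eset, mem_Eset]
  show (a.1.succ = i'.succ ∧ (a.2 : ℕ) % 2 = 1) ↔ (a.1 = i' ∧ (a.2 : ℕ) % 2 = 1)
  exact and_congr_left fun _ => ⟨fun hh => Fin.succ_injective _ hh, fun hh => by rw [hh]⟩

lemma exists_iota (h : ∀ i, k' i ≤ k i) (e : Edg (nn + 1) k)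
    (he : (e.2 : ℕ) < 2 * k' e.1 + 1) : ∃ a, embSame (nn + 1) k' k h a = e := by
  refine ⟨⟨e.1, ⟨(e.2 : ℕ), he⟩⟩, ?_⟩
  obtain ⟨i, m⟩ := e
  exact edg_ext_iff.mpr ⟨rfl, rfl⟩

lemma exists_kappa (h : ∀ i : Fin nn, k'' i = k i.succ) (e : Edg (nn + 1) k)
    (he : e.1 ≠ 0) : ∃ a, embSucc nn k'' k h a = e := by
  obtain ⟨i0, hi0⟩ := Fin.exists_succ_eq.mpr he
  have hb : (e.2 : ℕ) < 2 * k'' i0 + 1 := by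
    have := e.2.isLt
    rw [h i0, hi0]
    exact this
  refine ⟨⟨i0, ⟨(e.2 : ℕ), hb⟩⟩, ?_⟩
  obtain ⟨i, m⟩ := e
  exact edg_ext_iff.mpr ⟨hi0, rfl⟩

end Decomp


lemma inter_empty_iff {α : Type*} [DecidableEq α] {A B : Finset α} :
    A ∩ B = ∅ ↔ ∀ e ∈ A, e ∉ B := by
  rw [← Finset.disjoint_iff_inter_eq_empty, Finset.disjoint_left]

end Aux

/-- **Lemma 3.4**: with `𝔤_n` obtained from `𝔤_n'` by lengthening the first cycle by two
edges (new edges `x = x_{1,2k_1+1}`, `y = x_{1,2k_1}`) and `𝔤_n'' = 𝔤_n' \\ C_1'`, the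
Stanley–Reisner complexes (written, as in the paper, suppressing the elements of
`O_n ∪ E_1`, i.e. taking the link of `O_n ∪ E_1`) satisfy
`Δ_{𝔤_n} = Δ_{𝔤_n'} * {x} ∪ Δ'' * O_1'`, where `Δ'' = Δ_{𝔤_n''} * E_2'`. -/





theorem SRComplex_decomposition
    (K : Type*) [Field K] (nn : ℕ) (hnn : 1 ≤ nn)
    (k' : Fin (nn + 1) → ℕ) (hk' : ∀ i, 1 ≤ k' i)
    (k : Fin (nn + 1) → ℕ) (hk0 : k 0 = k' 0 + 1)
    (hkrest : ∀ i : Fin (nn + 1), i ≠ 0 → k i = k' i)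
    (k'' : Fin nn → ℕ) (hk'' : ∀ i : Fin nn, k'' i = k' i.succ) :
    SRreduced K (nn + 1) k (by omega) =
      joinSet ((Finset.map (embSame (nn + 1) k' k (fun i => by
        rcases eq_or_ne i 0 with h | h
        · rw [h, hk0]; omega
        · rw [hkrest i h]))) ''
          (SRreduced K (nn + 1) k' (by omega)))
        {(⟨0, ⟨2 * k 0, by omega⟩⟩ : Edg (nn + 1) k)}
      ∪ joinSet
          (joinSet ((Finset.map (embSucc nn k'' k (fun i => by rw [hk'' i, hkrest i.succ (Fin.succ_ne_zero i)]))) '' (SRreduced K nn k'' (by omega)))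
            (Eset (nn + 1) k ⟨1, by omega⟩))
          ((Oset (nn + 1) k' 0).map (embSame (nn + 1) k' k (fun i => by
        rcases eq_or_ne i 0 with h | h
        · rw [h, hk0]; omega
        · rw [hkrest i h]))) := by
  classical
  have hle : ∀ i, k' i ≤ k i := fun i => by
    rcases eq_or_ne i 0 with h | h
    · rw [h, hk0]; omega
    · rw [hkrest i h]
  have hkk : ∀ i : Fin nn, k'' i = k i.succ := fun i => by
    rw [hk'' i, hkrest i.succ (Fin.succ_ne_zero i)]
  set ι := embSame (nn + 1) k' k hle with hιdef
  set κ := embSucc nn k'' k hkk with hκdef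
  have hn1 : (0:ℕ) < nn + 1 := by omega
  have hnn0 : (0:ℕ) < nn := hnn
  set x : Edg (nn + 1) k := ⟨0, ⟨2 * k 0, by omega⟩⟩ with hxdef
  have hxfst : ((x.1 : ℕ)) = 0 := rfl
  have hxsnd : ((x.2 : ℕ)) = 2 * k 0 := rfl
  -- ι never hits x
  have hιx : ∀ a : Edg (nn + 1) k', ι a ≠ x := by
    intro a hax
    have h2 : ((ι a).2 : ℕ) = 2 * k 0 := by rw [hax]
    have h1 : (ι a).1 = (0 : Fin (nn + 1)) := by rw [hax]
    have h1' : a.1 = 0 := h1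
    have h2' : (a.2 : ℕ) = 2 * k 0 := h2
    have hb := a.2.isLt
    have hc2 : k' a.1 = k' 0 := by rw [h1']
    omega
  -- κ never lands in cycle 0
  have hκ0 : ∀ a : Edg nn k'', ((κ a).1 : ℕ) = (a.1 : ℕ) + 1 := fun a => rfl
  -- x is an odd edge of cycle 0
  have hxO : x ∈ Oset (nn + 1) k 0 := mem_Oset.mpr ⟨rfl, by rw [hxsnd]; omega⟩
  have hxS : x ∉ suppressedSet (nn + 1) k hn1 := by
    rw [mem_suppressedSet]
    rintro (⟨h1, _⟩ | ⟨_, h2⟩)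
    · rw [hxfst] at h1; omega
    · rw [hxsnd] at h2; omega
  show SRreduced K (nn + 1) k hn1 =
      joinSet ((Finset.map ι) '' (SRreduced K (nn + 1) k' hn1)) {x}
      ∪ joinSet
          (joinSet ((Finset.map κ) '' (SRreduced K nn k'' hnn0))
            (Eset (nn + 1) k ⟨1, by omega⟩))
          ((Oset (nn + 1) k' 0).map ι)
  ext A
  rw [Set.mem_union]
  constructor
  · -- forward direction
    intro hA
    rw [mem_SRreduced_iff, inter_empty_iff] at hA
    obtain ⟨hS, hface⟩ := hA
    by_cases hx : x ∈ A
    · -- x ∈ A : left component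
      left
      have hinj : Set.InjOn ι (ι ⁻¹' (A.erase x)) := fun a _ b _ hab => ι.injective hab
      set A' : Finset (Edg (nn + 1) k') := (A.erase x).preimage ι hinj with hA'def
      have hmemA' : ∀ a : Edg (nn + 1) k', a ∈ A' ↔ ι a ∈ A.erase x := fun a =>
        Finset.mem_preimage
      have hmapA' : Finset.map ι A' = A.erase x := by
        ext e
        rw [Finset.mem_map]
        constructor
        · rintro ⟨a, ha, rfl⟩
          exact (hmemA' a).mp ha
        · intro he
          have heA : e ∈ A := Finset.mem_of_mem_erase he
          have hex : e ≠ x := Finset.ne_of_mem_erase he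
          have hb : (e.2 : ℕ) < 2 * k' e.1 + 1 := by
            by_cases h0 : e.1 = 0
            · have hpar : (e.2 : ℕ) % 2 = 0 := by
                have := hS e heA
                rw [mem_suppressedSet] at this
                push_neg at this
                have h2 := this.2 (by rw [h0]; rfl)
                omega
              have hne2 : (e.2 : ℕ) ≠ 2 * k 0 := by
                intro hc
                apply hex
                obtain ⟨i, m⟩ := e
                have h0' : i = 0 := h0
                subst h0'
                exact edg_ext_iff.mpr ⟨rfl, hc⟩
              have hlt := e.2.isLt
              have hc1 : k e.1 = k 0 := by rw [h0]
              have hc2 : k' e.1 = k' 0 := by rw [h0]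
              omega
            · rw [← hkrest e.1 h0]
              exact e.2.isLt
          obtain ⟨a, rfl⟩ := exists_iota hle e hb
          exact ⟨a, (hmemA' a).mpr he, rfl⟩
      refine ⟨Finset.map ι A', ⟨A', ?_, rfl⟩, {x}, Finset.Subset.refl _, ?_⟩
      · -- A' ∈ SRreduced k'
        rw [mem_SRreduced_iff, inter_empty_iff]
        constructor
        · intro a ha haS
          have hιaA : ι a ∈ A := Finset.mem_of_mem_erase ((hmemA' a).mp ha)
          apply hS (ι a) hιaA
          rw [mem_suppressedSet] at haS ⊢
          exact haS
        · intro i j hij hsub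
          apply hface i j hij
          intro e he
          rcases Finset.mem_union.mp he with heO | heE
          · by_cases hex : e = x
            · rw [hex]; exact hx
            · have hb : (e.2 : ℕ) < 2 * k' e.1 + 1 := by
                obtain ⟨he1, he2⟩ := mem_Oset.mp heO
                by_cases h0 : e.1 = 0
                · have hne2 : (e.2 : ℕ) ≠ 2 * k 0 := by
                    intro hc
                    apply hex
                    obtain ⟨i', m⟩ := e
                    have h0' : i' = 0 := h0
                    subst h0'
                    exact edg_ext_iff.mpr ⟨rfl, hc⟩
                  have hlt := e.2.isLt
                  have hc1 : k e.1 = k 0 := by rw [h0]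
                  have hc2 : k' e.1 = k' 0 := by rw [h0]
                  omega
                · rw [← hkrest e.1 h0]
                  exact e.2.isLt
              obtain ⟨a, rfl⟩ := exists_iota hle e hb
              have haO : a ∈ Oset (nn + 1) k' i := (iota_mem_Oset hle a i).mp heO
              have haA' : a ∈ A' := hsub (Finset.mem_union_left _ haO)
              exact Finset.mem_of_mem_erase ((hmemA' a).mp haA')
          · have hj0 : j ≠ 0 := by
              intro hc
              rw [hc] at hij
              exact absurd hij (Fin.not_lt_zero i)
            have hb : (e.2 : ℕ) < 2 * k' e.1 + 1 := by
              obtain ⟨he1, _⟩ := mem_Eset.mp heE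
              rw [← hkrest e.1 (he1 ▸ hj0)]
              exact e.2.isLt
            obtain ⟨a, rfl⟩ := exists_iota hle e hb
            have haE : a ∈ Eset (nn + 1) k' j := (iota_mem_Eset hle a j).mp heE
            have haA' : a ∈ A' := hsub (Finset.mem_union_right _ haE)
            exact Finset.mem_of_mem_erase ((hmemA' a).mp haA')
      · -- A = map ι A' ∪ {x}
        rw [hmapA', Finset.union_comm, ← Finset.insert_eq, Finset.insert_erase hx]
    · -- x ∉ A : right component
      right
      obtain ⟨F, hF⟩ : ∃ F : Finset (Edg (nn + 1) k),
          F = A.filter (fun e => e.1 ≠ 0 ∧ e ∉ Eset (nn + 1) k ⟨1, by omega⟩) := ⟨_, rfl⟩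
      have hmemF : ∀ e : Edg (nn + 1) k,
          e ∈ F ↔ (e ∈ A ∧ e.1 ≠ 0 ∧ e ∉ Eset (nn + 1) k ⟨1, by omega⟩) := by
        intro e
        rw [hF, Finset.mem_filter]
      have hinj : Set.InjOn κ (κ ⁻¹' (F : Set (Edg (nn + 1) k))) :=
        fun a _ b _ hab => κ.injective hab
      set A'' : Finset (Edg nn k'') := F.preimage κ hinj with hA''def
      have hmemA'' : ∀ a : Edg nn k'', a ∈ A'' ↔ κ a ∈ F := fun a => Finset.mem_preimage
      have hmapA'' : Finset.map κ A'' = F := by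
        ext e
        rw [Finset.mem_map]
        constructor
        · rintro ⟨a, ha, rfl⟩
          exact (hmemA'' a).mp ha
        · intro he
          obtain ⟨a, rfl⟩ := exists_kappa hkk e ((hmemF e).mp he).2.1
          exact ⟨a, (hmemA'' a).mpr he, rfl⟩
      refine ⟨Finset.map κ A'' ∪ (A ∩ Eset (nn + 1) k ⟨1, by omega⟩),
        ⟨Finset.map κ A'', ⟨A'', ?_, rfl⟩, A ∩ Eset (nn + 1) k ⟨1, by omega⟩,
          Finset.inter_subset_right, rfl⟩,
        A ∩ ((Oset (nn + 1) k' 0).map ι), Finset.inter_subset_right, ?_⟩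
      · -- A'' ∈ SRreduced k''
        rw [mem_SRreduced_iff, inter_empty_iff]
        constructor
        · intro a ha haS
          have hfa := (hmemF (κ a)).mp ((hmemA'' a).mp ha)
          have hκaA : κ a ∈ A := hfa.1
          have hPa := hfa.2
          rw [mem_suppressedSet] at haS
          rcases haS with ⟨h1, h2⟩ | ⟨h1, h2⟩
          · apply hS (κ a) hκaA
            rw [mem_suppressedSet]
            left
            refine ⟨?_, h2⟩
            rw [hκ0 a, h1]
            omega
          · apply hPa.2
            rw [mem_Eset]
            refine ⟨?_, h2⟩
            apply Fin.ext
            rw [hκ0 a, h1]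
        · intro i' j' hij' hsub''
          apply hface i'.succ j'.succ (by rwa [Fin.succ_lt_succ_iff])
          intro e he
          rcases Finset.mem_union.mp he with heO | heE
          · have h0 : e.1 ≠ 0 := by
              obtain ⟨h1, _⟩ := mem_Oset.mp heO
              rw [h1]
              exact Fin.succ_ne_zero i'
            obtain ⟨a, rfl⟩ := exists_kappa hkk e h0
            have haO : a ∈ Oset nn k'' i' := (kappa_mem_Oset hkk a i').mp heO
            have haA'' : a ∈ A'' := hsub'' (Finset.mem_union_left _ haO)
            exact ((hmemF (κ a)).mp ((hmemA'' a).mp haA'')).1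
          · have h0 : e.1 ≠ 0 := by
              obtain ⟨h1, _⟩ := mem_Eset.mp heE
              rw [h1]
              exact Fin.succ_ne_zero j'
            obtain ⟨a, rfl⟩ := exists_kappa hkk e h0
            have haE : a ∈ Eset nn k'' j' := (kappa_mem_Eset hkk a j').mp heE
            have haA'' : a ∈ A'' := hsub'' (Finset.mem_union_right _ haE)
            exact ((hmemF (κ a)).mp ((hmemA'' a).mp haA'')).1
      · -- decomposition of A
        ext e
        constructor
        · intro he
          by_cases h0 : e.1 = 0
          · apply Finset.mem_union_right
            refine Finset.mem_inter.mpr ⟨he, ?_⟩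
            have hpar : (e.2 : ℕ) % 2 = 0 := by
              have := hS e he
              rw [mem_suppressedSet] at this
              push_neg at this
              have h2 := this.2 (by rw [h0]; rfl)
              omega
            have hne2 : (e.2 : ℕ) ≠ 2 * k 0 := by
              intro hc
              apply hx
              obtain ⟨i', m⟩ := e
              have h0' : i' = 0 := h0
              subst h0'
              have : (⟨0, m⟩ : Edg (nn + 1) k) = x := edg_ext_iff.mpr ⟨rfl, hc⟩
              rwa [this] at he
            have hb : (e.2 : ℕ) < 2 * k' e.1 + 1 := by
              have hlt := e.2.isLt
              have hc1 : k e.1 = k 0 := by rw [h0]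
              have hc2 : k' e.1 = k' 0 := by rw [h0]
              omega
            obtain ⟨a, rfl⟩ := exists_iota hle e hb
            rw [Finset.mem_map]
            refine ⟨a, mem_Oset.mpr ⟨h0, hpar⟩, rfl⟩
          · by_cases h1 : e ∈ Eset (nn + 1) k ⟨1, by omega⟩
            · exact Finset.mem_union_left _
                (Finset.mem_union_right _ (Finset.mem_inter.mpr ⟨he, h1⟩))
            · apply Finset.mem_union_left
              apply Finset.mem_union_left
              rw [hmapA'']
              exact (hmemF e).mpr ⟨he, h0, h1⟩
        · intro he
          rcases Finset.mem_union.mp he with he' | he'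
          · rcases Finset.mem_union.mp he' with he'' | he''
            · rw [hmapA''] at he''
              exact ((hmemF e).mp he'').1
            · exact (Finset.mem_inter.mp he'').1
          · exact (Finset.mem_inter.mp he').1
  · -- backward direction
    intro hA
    rw [mem_SRreduced_iff, inter_empty_iff]
    rcases hA with hL | hR
    · obtain ⟨A₀, ⟨A', hA', rfl⟩, B, hB, rfl⟩ := hL
      rw [mem_SRreduced_iff, inter_empty_iff] at hA'
      obtain ⟨hS', hface'⟩ := hA'
      constructor
      · intro e he heS
        rcases Finset.mem_union.mp he with heM | heB
        · obtain ⟨a, haA', rfl⟩ := Finset.mem_map.mp heM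
          apply hS' a haA'
          rw [mem_suppressedSet] at heS ⊢
          exact heS
        · have hex : e = x := Finset.mem_singleton.mp (hB heB)
          rw [hex] at heS
          exact hxS heS
      · intro i j hij hsub
        apply hface' i j hij
        intro a ha
        have hιaA : ι a ∈ Finset.map ι A' ∪ B := by
          apply hsub
          rcases Finset.mem_union.mp ha with haO | haE
          · exact Finset.mem_union_left _ ((iota_mem_Oset hle a i).mpr haO)
          · exact Finset.mem_union_right _ ((iota_mem_Eset hle a j).mpr haE)
        rcases Finset.mem_union.mp hιaA with hm | hm
        · exact (Finset.mem_map' ι).mp hm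
        · exact absurd (Finset.mem_singleton.mp (hB hm)) (hιx a)
    · obtain ⟨C, ⟨C₀, ⟨A'', hA'', rfl⟩, B₁, hB₁, rfl⟩, B₂, hB₂, rfl⟩ := hR
      rw [mem_SRreduced_iff, inter_empty_iff] at hA''
      obtain ⟨hS'', hface''⟩ := hA''
      constructor
      · intro e he heS
        rcases Finset.mem_union.mp he with he' | heB₂
        · rcases Finset.mem_union.mp he' with heM | heB₁
          · obtain ⟨a, haA'', rfl⟩ := Finset.mem_map.mp heM
            rw [mem_suppressedSet] at heS
            rcases heS with ⟨h1, h2⟩ | ⟨h1, h2⟩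
            · apply hS'' a haA''
              rw [mem_suppressedSet]
              left
              refine ⟨?_, h2⟩
              have := hκ0 a
              omega
            · have := hκ0 a
              omega
          · have h1 := mem_Eset.mp (hB₁ heB₁)
            rw [mem_suppressedSet] at heS
            have hv : (e.1 : ℕ) = 1 := by rw [h1.1]
            have hp := h1.2
            rcases heS with ⟨h2, h3⟩ | ⟨h2, h3⟩
            · omega
            · omega
        · obtain ⟨a, haO, rfl⟩ := Finset.mem_map.mp (hB₂ heB₂)
          obtain ⟨ha1, ha2⟩ := mem_Oset.mp haO
          rw [mem_suppressedSet] at heS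
          have hv : ((ι a).1 : ℕ) = 0 := by
            show (a.1 : ℕ) = 0
            rw [ha1]
            rfl
          have hp : ((ι a).2 : ℕ) % 2 = 0 := ha2
          rcases heS with ⟨h2, h3⟩ | ⟨h2, h3⟩
          · omega
          · omega
      · intro i j hij hsub
        by_cases h0 : i = 0
        · subst h0
          have hxA : x ∈ (Finset.map κ A'' ∪ B₁) ∪ B₂ :=
            hsub (Finset.mem_union_left _ hxO)
          rcases Finset.mem_union.mp hxA with hx' | hx'
          · rcases Finset.mem_union.mp hx' with hx'' | hx''
            · obtain ⟨a, _, hax⟩ := Finset.mem_map.mp hx''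
              have := hκ0 a
              rw [hax] at this
              omega
            · have h1 := mem_Eset.mp (hB₁ hx'')
              have hv : (x.1 : ℕ) = 1 := by rw [h1.1]
              omega
          · obtain ⟨a, _, hax⟩ := Finset.mem_map.mp (hB₂ hx')
            exact hιx a hax
        · obtain ⟨i0, rfl⟩ := Fin.exists_succ_eq.mpr h0
          have hj0 : j ≠ 0 := by
            intro hc
            rw [hc] at hij
            exact absurd hij (Fin.not_lt_zero _)
          obtain ⟨j0, rfl⟩ := Fin.exists_succ_eq.mpr hj0
          apply hface'' i0 j0 (Fin.succ_lt_succ_iff.mp hij)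
          intro a ha
          rcases Finset.mem_union.mp ha with haO | haE
          · have hκa : κ a ∈ (Finset.map κ A'' ∪ B₁) ∪ B₂ :=
              hsub (Finset.mem_union_left _ ((kappa_mem_Oset hkk a i0).mpr haO))
            rcases Finset.mem_union.mp hκa with h' | h'
            · rcases Finset.mem_union.mp h' with h'' | h''
              · exact (Finset.mem_map' κ).mp h''
              · have h1 := mem_Eset.mp (hB₁ h'')
                have hp1 : ((κ a).2 : ℕ) % 2 = 1 := h1.2
                have hp0 : ((κ a).2 : ℕ) % 2 = 0 := (mem_Oset.mp haO).2
                omega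
            · obtain ⟨b, hbO, hba⟩ := Finset.mem_map.mp (hB₂ h')
              have hb1 : ((ι b).1 : ℕ) = 0 := by
                show (b.1 : ℕ) = 0
                rw [(mem_Oset.mp hbO).1]
                rfl
              have hv2 : ((κ a).1 : ℕ) = (a.1 : ℕ) + 1 := hκ0 a
              rw [← hba] at hv2
              omega
          · have hκa : κ a ∈ (Finset.map κ A'' ∪ B₁) ∪ B₂ :=
              hsub (Finset.mem_union_right _ ((kappa_mem_Eset hkk a j0).mpr haE))
            rcases Finset.mem_union.mp hκa with h' | h'
            · rcases Finset.mem_union.mp h' with h'' | h''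
              · exact (Finset.mem_map' κ).mp h''
              · have h1 := mem_Eset.mp (hB₁ h'')
                have hv1 : ((κ a).1 : ℕ) = 1 := by rw [h1.1]
                have hv2 : ((κ a).1 : ℕ) = (a.1 : ℕ) + 1 := hκ0 a
                have ha1 : (a.1 : ℕ) = (j0 : ℕ) := by rw [(mem_Eset.mp haE).1]
                have hij0 : (i0 : ℕ) < (j0 : ℕ) := Fin.succ_lt_succ_iff.mp hij
                omega
            · obtain ⟨b, hbO, hba⟩ := Finset.mem_map.mp (hB₂ h')
              have hb2 : ((ι b).2 : ℕ) % 2 = 0 := (mem_Oset.mp hbO).2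
              have ha2 : ((κ a).2 : ℕ) % 2 = 1 := (mem_Eset.mp haE).2
              rw [hba] at hb2
              omega



end OddCycleComp
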